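/- For every k ∈ ℕ and every t ∈ ℝ, the single-integral kernel identity holds: ∫_{0}^{∞} (x^{2k+1}/(2k+1)!) · K(x,t) dx = Σ_{m=0}^{k+1} (−1)^{m−1} (2^{2m} − 2) · (B_{2m}/(2m)!) · (t^{2k+2−2m}/(2k+2−2m)!). In particular the left-hand side is a polynomial of degree 2k+2 in t with leading term t^{2k+2}/(2k+2)!. -/

import Mathlib

/-!
Write `K(x,t) = f(x+t) + f(x-t)` with `f(y) = 1/(1+e^{πy})`. Translating both integrals to
`f`-weighted integrals over `(0,∞)`, and using `f(y) + f(-y) = 1` on the stretch between `-t`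
and `0`, gives for odd `n`
`∫₀^∞ xⁿ K(x,t) dx = ∫₀^∞ ((u-t)ⁿ + (u+t)ⁿ) f(u) du + t^{n+1}/(n+1)`.
The binomial expansion keeps only the odd moments of `f`, and integrating the geometric series
`f(u) = Σ_j (-1)^j e^{-π(j+1)u}` termwise gives
`∫₀^∞ u^{2r+1} f(u) du = (2r+1)! η(2r+2) / π^{2r+2}`, where the alternating zeta value
`η(2m) = (1 - 2^{1-2m}) ζ(2m)` is given by Euler's formula for `ζ(2m)` in terms of `B_{2m}`.
-/

noncomputable section

def mirzakhaniK (x t : ℝ) : ℝ :=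
  1 / (1 + Real.exp (Real.pi * (x + t))) + 1 / (1 + Real.exp (Real.pi * (x - t)))

/-- `(-1) ^ (m + 1)` stands for the paper's `(-1)^{m-1}`, which truncates at `m = 0` in `ℕ`. -/
def hPoly (k : ℕ) (t : ℝ) : ℝ :=
  ∑ m ∈ Finset.range (k + 2),
    (-1 : ℝ) ^ (m + 1) * (2 ^ (2 * m) - 2) *
      (((bernoulli (2 * m) : ℚ) : ℝ) / Nat.factorial (2 * m)) *
      (t ^ (2 * k + 2 - 2 * m) / Nat.factorial (2 * k + 2 - 2 * m))

open MeasureTheory Real Set Filter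
open scoped Nat

theorem Finset.sum_range_two_mul {M : Type*} [AddCommMonoid M] (f : ℕ → M) (n : ℕ) :
    ∑ i ∈ Finset.range (2 * n), f i
      = ∑ i ∈ Finset.range n, (f (2 * i) + f (2 * i + 1)) := by
  induction n with
  | zero => simp
  | succ n ih =>
    rw [Nat.mul_succ, Finset.sum_range_succ, Finset.sum_range_succ, Finset.sum_range_succ, ih,
      add_assoc]

namespace Real

theorem sigmoid_neg_le_exp_neg (z : ℝ) : sigmoid (-z) ≤ exp (-z) := by
  rw [← sigmoid_mul_rexp_neg]
  exact mul_le_of_le_one_left (exp_pos _).le (sigmoid_le_one z)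

theorem hasSum_sigmoid_neg {z : ℝ} (hz : 0 < z) :
    HasSum (fun n : ℕ => (-1) ^ n * exp (-((n + 1) * z))) (sigmoid (-z)) := by
  have hr : ‖-exp (-z)‖ < 1 := by
    rw [norm_neg, norm_of_nonneg (exp_pos _).le, exp_lt_one_iff, neg_lt_zero]
    exact hz
  have h := (hasSum_geometric_of_norm_lt_one hr).mul_right (exp (-z))
  rw [sub_neg_eq_add, ← sigmoid_def, sigmoid_mul_rexp_neg] at h
  refine h.congr_fun fun n => ?_
  rw [neg_pow (exp (-z)), ← exp_nat_mul, mul_assoc, ← exp_add]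
  ring_nf

end Real

theorem integrableOn_pow_mul_exp_neg_mul {c : ℝ} (hc : 0 < c) (j : ℕ) :
    IntegrableOn (fun x : ℝ => x ^ j * exp (-(c * x))) (Ioi 0) := by
  refine (integrableOn_rpow_mul_exp_neg_mul_rpow (s := j) (p := 1)
    (by linarith [j.cast_nonneg (α := ℝ)]) one_pos hc).congr_fun (fun x _ => ?_)
    measurableSet_Ioi
  simp [rpow_natCast]

theorem integral_pow_mul_exp_neg_mul {c : ℝ} (hc : 0 < c) (j : ℕ) :
    ∫ x in Ioi 0, x ^ j * exp (-(c * x)) = j ! / c ^ (j + 1) := by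
  have h := integral_rpow_mul_exp_neg_mul_Ioi (a := j + 1) (by positivity) hc
  rw [Gamma_nat_eq_factorial, add_sub_cancel_right, ← Nat.cast_succ, rpow_natCast] at h
  convert h using 1
  · simp [rpow_natCast]
  · rw [Nat.succ_eq_add_one, div_pow, one_pow]
    field_simp

theorem hasSum_alternating_one_div_pow {p : ℕ} (hp : p ≠ 0) {Z : ℝ}
    (hZ : HasSum (fun n : ℕ => 1 / (n : ℝ) ^ p) Z) :
    HasSum (fun n : ℕ => (-1) ^ n / ((n : ℝ) + 1) ^ p) ((1 - 2 / 2 ^ p) * Z) := by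
  set b : ℕ → ℝ := fun n => 1 / (n : ℝ) ^ p
  have hb0 : b 0 = 0 := by simp [b, hp]
  have heven : HasSum (fun n => b (2 * n)) (Z / 2 ^ p) :=
    (hZ.div_const _).congr_fun fun n => by
      simp only [b]
      push_cast
      ring
  have hodd : HasSum (fun n => b (2 * n + 1)) (Z - Z / 2 ^ p) := by
    have hs : Summable fun n => b (2 * n + 1) :=
      hZ.summable.comp_injective fun m n h => by omega
    have h := (heven.even_add_odd hs.hasSum).unique hZ
    rw [← eq_sub_of_add_eq' h]
    exact hs.hasSum
  have heven' : HasSum (fun n => b (2 * (n + 1))) (Z / 2 ^ p) := by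
    simpa [hb0] using (hasSum_nat_add_iff' 1).mpr heven
  convert HasSum.even_add_odd (f := fun n : ℕ => (-1) ^ n / ((n : ℝ) + 1) ^ p)
    (hodd.congr_fun fun n => ?_) (heven'.neg.congr_fun fun n => ?_) using 1
  · ring
  · simp [b, pow_mul]
  · simp [b, pow_succ, pow_mul]
    ring

theorem setIntegral_Ioi_comp_add_right {E : Type*} [NormedAddCommGroup E] [NormedSpace ℝ E]
    (f : ℝ → E) (a d : ℝ) :
    ∫ x in Ioi a, f (x + d) = ∫ x in Ioi (a + d), f x := by
  have h := (measurableEmbedding_addRight d).setIntegral_map (μ := volume) f (Ioi (a + d))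
  rw [map_add_right_eq_self, preimage_add_const_Ioi, add_sub_cancel_right] at h
  exact h.symm

theorem integrableOn_Ioi_comp_add_right_iff {E : Type*} [NormedAddCommGroup E] {f : ℝ → E}
    {a d : ℝ} :
    IntegrableOn (fun x => f (x + d)) (Ioi a) ↔ IntegrableOn f (Ioi (a + d)) := by
  have h := (measurableEmbedding_addRight d).integrableOn_map_iff (μ := volume) (f := f)
    (s := Ioi (a + d))
  rw [map_add_right_eq_self, preimage_add_const_Ioi, add_sub_cancel_right] at h
  exact h.symm

def fermi (y : ℝ) : ℝ := sigmoid (-(π * y))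

theorem mirzakhaniK_eq_fermi (x t : ℝ) : mirzakhaniK x t = fermi (x + t) + fermi (x - t) := by
  simp only [mirzakhaniK, fermi, sigmoid_def, neg_neg, one_div]

theorem fermi_neg (y : ℝ) : fermi (-y) = 1 - fermi y := by
  rw [fermi, fermi, mul_neg, sigmoid_neg]

@[fun_prop]
theorem continuous_fermi : Continuous fermi :=
  continuous_sigmoid.comp (by fun_prop)

theorem fermi_nonneg (y : ℝ) : 0 ≤ fermi y := sigmoid_nonneg _

theorem fermi_le_exp (y : ℝ) : fermi y ≤ exp (-(π * y)) := sigmoid_neg_le_exp_neg _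

theorem hasSum_fermi {x : ℝ} (hx : 0 < x) :
    HasSum (fun n : ℕ => (-1) ^ n * exp (-((π * (n + 1)) * x))) (fermi x) := by
  refine (hasSum_sigmoid_neg (mul_pos pi_pos hx)).congr_fun fun n => ?_
  ring_nf

theorem integrableOn_pow_mul_fermi_add (j : ℕ) (a c : ℝ) :
    IntegrableOn (fun x => x ^ j * fermi (x + a)) (Ioi c) := by
  have hcont : Continuous fun x => x ^ j * fermi (x + a) := by fun_prop
  have hpos : IntegrableOn (fun x => x ^ j * fermi (x + a)) (Ioi 0) := by
    refine ((integrableOn_pow_mul_exp_neg_mul pi_pos j).const_mul (exp (-(π * a)))).mono'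
      hcont.aestronglyMeasurable ?_
    filter_upwards [ae_restrict_mem measurableSet_Ioi] with x (hx : 0 < x)
    have hxj : 0 ≤ x ^ j := pow_nonneg hx.le j
    rw [norm_mul, norm_of_nonneg hxj, norm_of_nonneg (fermi_nonneg _)]
    calc x ^ j * fermi (x + a) ≤ x ^ j * exp (-(π * (x + a))) :=
          mul_le_mul_of_nonneg_left (fermi_le_exp _) hxj
      _ = exp (-(π * a)) * (x ^ j * exp (-(π * x))) := by
          rw [mul_add, neg_add, exp_add]; ring
  refine ((hcont.integrableOn_Icc (a := c) (b := 0)).union hpos).mono_set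
    fun x (hx : c < x) => ?_
  rcases le_or_gt x 0 with h | h
  exacts [Or.inl ⟨hx.le, h⟩, Or.inr h]

theorem integrableOn_add_pow_mul_fermi (j : ℕ) (s c : ℝ) :
    IntegrableOn (fun u => (u + s) ^ j * fermi u) (Ioi c) := by
  have h := (integrableOn_Ioi_comp_add_right_iff (f := fun u => (u + s) ^ j * fermi u)
    (a := c + s) (d := -s)).mp (by simpa using integrableOn_pow_mul_fermi_add j (-s) (c + s))
  simpa using h

theorem hasSum_integral_pow_mul_fermi {j : ℕ} (hj : j ≠ 0) :
    HasSum (fun n : ℕ => (-1) ^ n * (j ! / (π * (n + 1)) ^ (j + 1)))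
      (∫ x in Ioi 0, x ^ j * fermi x) := by
  set F : ℕ → ℝ → ℝ := fun n x => (-1) ^ n * (x ^ j * exp (-((π * (n + 1)) * x)))
  have hc (n : ℕ) : 0 < π * (n + 1) := by positivity
  have hF (n : ℕ) : Integrable (F n) (volume.restrict (Ioi 0)) :=
    (integrableOn_pow_mul_exp_neg_mul (hc n) j).const_mul _
  have hnorm (n : ℕ) : ∫ x in Ioi 0, ‖F n x‖ = j ! / (π * (n + 1)) ^ (j + 1) := by
    rw [← integral_pow_mul_exp_neg_mul (hc n) j]
    refine setIntegral_congr_fun measurableSet_Ioi fun x (hx : 0 < x) => ?_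
    simp [F, abs_of_pos hx]
  have hsum : Summable fun n => ∫ x in Ioi 0, ‖F n x‖ := by
    have h := (summable_nat_add_iff 1).mpr
      (Real.summable_one_div_nat_pow.mpr (by omega : 1 < j + 1))
    refine (h.mul_left (j ! / π ^ (j + 1))).congr fun n => ?_
    push_cast
    rw [hnorm, mul_pow, mul_one_div, div_div]
  have hseries : ∫ x in Ioi 0, x ^ j * fermi x = ∫ x in Ioi 0, ∑' n, F n x := by
    refine setIntegral_congr_fun measurableSet_Ioi fun x (hx : 0 < x) => ?_
    refine (((hasSum_fermi hx).mul_left (x ^ j)).congr_fun fun n => ?_).tsum_eq.symm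
    simp only [F]
    ring
  rw [hseries]
  refine (hasSum_integral_of_summable_integral_norm hF hsum).congr_fun fun n => ?_
  rw [integral_const_mul, integral_pow_mul_exp_neg_mul (hc n)]

def hPolyCoeff (m : ℕ) : ℝ :=
  (-1 : ℝ) ^ (m + 1) * (2 ^ (2 * m) - 2) *
    (((bernoulli (2 * m) : ℚ) : ℝ) / Nat.factorial (2 * m))

theorem integral_pow_mul_fermi_odd (r : ℕ) :
    ∫ x in Ioi 0, x ^ (2 * r + 1) * fermi x = (2 * r + 1)! * hPolyCoeff (r + 1) / 2 := by
  have hmoment := hasSum_integral_pow_mul_fermi (j := 2 * r + 1) (by omega)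
  have heta := (hasSum_alternating_one_div_pow (p := 2 * (r + 1)) (by omega)
    (hasSum_zeta_nat (k := r + 1) (by omega))).mul_left ((2 * r + 1)! / π ^ (2 * (r + 1)))
  rw [hmoment.unique (heta.congr_fun fun n => ?_)]
  · rw [hPolyCoeff, show 2 * (r + 1) - 1 = 2 * r + 1 by omega,
      show 2 * (r + 1) = 2 * r + 1 + 1 by omega, Nat.factorial_succ]
    push_cast
    field_simp
    ring
  · rw [show 2 * r + 1 + 1 = 2 * (r + 1) by omega, mul_pow]
    field_simp

theorem intervalIntegral_add_pow_mul_fermi {n : ℕ} (hn : Odd n) (t : ℝ) :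
    ∫ u in -t..0, (u + t) ^ n * fermi u
      = t ^ (n + 1) / (n + 1) + ∫ u in 0..t, (u - t) ^ n * fermi u := by
  have hcont : Continuous fun y => (t - y) ^ n := by fun_prop
  calc ∫ u in -t..0, (u + t) ^ n * fermi u
      = ∫ y in 0..t, (-y + t) ^ n * fermi (-y) := by
        rw [intervalIntegral.integral_comp_neg fun u => (u + t) ^ n * fermi u, neg_zero]
    _ = ∫ y in 0..t, ((t - y) ^ n - (t - y) ^ n * fermi y) := by
        congr 1 with y
        rw [fermi_neg]
        ring
    _ = (∫ y in 0..t, (t - y) ^ n) - ∫ y in 0..t, (t - y) ^ n * fermi y :=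
        intervalIntegral.integral_sub (hcont.intervalIntegrable _ _)
          ((hcont.mul continuous_fermi).intervalIntegrable _ _)
    _ = t ^ (n + 1) / (n + 1) + ∫ u in 0..t, (u - t) ^ n * fermi u := by
        rw [intervalIntegral.integral_comp_sub_left fun y => y ^ n, integral_pow, sub_eq_add_neg,
          ← intervalIntegral.integral_neg]
        congr 1
        · simp
        · congr 1 with y
          rw [← neg_sub t y, hn.neg_pow]
          ring

theorem integral_pow_mul_mirzakhaniK {n : ℕ} (hn : Odd n) (t : ℝ) :
    ∫ x in Ioi 0, x ^ n * mirzakhaniK x t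
      = (∫ u in Ioi 0, ((u - t) ^ n + (u + t) ^ n) * fermi u) + t ^ (n + 1) / (n + 1) := by
  have hplus (c : ℝ) := integrableOn_add_pow_mul_fermi n t c
  have hminus (c : ℝ) : IntegrableOn (fun u => (u - t) ^ n * fermi u) (Ioi c) := by
    simpa [sub_eq_add_neg] using integrableOn_add_pow_mul_fermi n (-t) c
  have hcont (s : ℝ) : Continuous fun u => (u + s) ^ n * fermi u := by fun_prop
  have h₁ : ∫ x in Ioi 0, x ^ n * fermi (x + t)
      = (∫ u in Ioi 0, (u - t) ^ n * fermi u) - ∫ u in 0..t, (u - t) ^ n * fermi u := by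
    have h := setIntegral_Ioi_comp_add_right (fun u => (u - t) ^ n * fermi u) 0 t
    simp only [add_sub_cancel_right, zero_add] at h
    have hII : IntervalIntegrable (fun u => (u - t) ^ n * fermi u) volume 0 t := by
      simpa [sub_eq_add_neg] using (hcont (-t)).intervalIntegrable 0 t
    linarith [h, intervalIntegral.integral_interval_add_Ioi' hII (hminus t)]
  have h₂ : ∫ x in Ioi 0, x ^ n * fermi (x - t)
      = (∫ u in -t..0, (u + t) ^ n * fermi u) + ∫ u in Ioi 0, (u + t) ^ n * fermi u := by
    have h := setIntegral_Ioi_comp_add_right (fun u => (u + t) ^ n * fermi u) 0 (-t)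
    simp only [neg_add_cancel_right, zero_add] at h
    simp only [← sub_eq_add_neg] at h
    rw [h, intervalIntegral.integral_interval_add_Ioi' ((hcont t).intervalIntegrable _ _)
      (hplus 0)]
  have h₃ : ∫ u in Ioi 0, ((u - t) ^ n + (u + t) ^ n) * fermi u
      = (∫ u in Ioi 0, (u - t) ^ n * fermi u) + ∫ u in Ioi 0, (u + t) ^ n * fermi u := by
    simp_rw [add_mul]
    exact integral_add (hminus 0) (hplus 0)
  have hint_minus : IntegrableOn (fun x => x ^ n * fermi (x - t)) (Ioi 0) := by
    simpa [sub_eq_add_neg] using integrableOn_pow_mul_fermi_add n (-t) 0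
  simp_rw [mirzakhaniK_eq_fermi, mul_add]
  rw [integral_add (integrableOn_pow_mul_fermi_add n t 0) hint_minus, h₁, h₂, h₃,
    intervalIntegral_add_pow_mul_fermi hn]
  ring

theorem sub_pow_add_add_pow_div_factorial (u t : ℝ) (k : ℕ) :
    ((u - t) ^ (2 * k + 1) + (u + t) ^ (2 * k + 1)) / (2 * k + 1)!
      = ∑ r ∈ Finset.range (k + 1),
          2 * (u ^ (2 * r + 1) / (2 * r + 1)!) * (t ^ (2 * (k - r)) / (2 * (k - r))!) := by
  rw [sub_eq_add_neg, add_pow, add_pow, ← Finset.sum_add_distrib, Finset.sum_div,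
    show 2 * k + 1 + 1 = 2 * (k + 1) by ring, Finset.sum_range_two_mul]
  refine Finset.sum_congr rfl fun r hr => ?_
  have hr : r ≤ k := Nat.lt_succ_iff.mp (Finset.mem_range.mp hr)
  rw [Nat.cast_choose ℝ (by omega : 2 * r ≤ 2 * k + 1),
    Nat.cast_choose ℝ (by omega : 2 * r + 1 ≤ 2 * k + 1),
    show 2 * k + 1 - 2 * r = 2 * (k - r) + 1 by omega,
    show 2 * k + 1 - (2 * r + 1) = 2 * (k - r) by omega,
    Odd.neg_pow (odd_two_mul_add_one _), Even.neg_pow (even_two_mul _)]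
  field_simp
  ring

theorem integral_sub_pow_add_add_pow_mul_fermi (k : ℕ) (t : ℝ) :
    (∫ u in Ioi 0, ((u - t) ^ (2 * k + 1) + (u + t) ^ (2 * k + 1)) * fermi u) / (2 * k + 1)!
      = ∑ r ∈ Finset.range (k + 1),
          hPolyCoeff (r + 1) * (t ^ (2 * (k - r)) / (2 * (k - r))!) := by
  have hterm (r : ℕ) (u : ℝ) :
      2 * (u ^ (2 * r + 1) / (2 * r + 1)!) * (t ^ (2 * (k - r)) / (2 * (k - r))!) * fermi u
        = 2 * (t ^ (2 * (k - r)) / (2 * (k - r))!) / (2 * r + 1)!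
            * (u ^ (2 * r + 1) * fermi u) := by
    ring
  have hint (j : ℕ) : IntegrableOn (fun u => u ^ j * fermi u) (Ioi 0) := by
    simpa using integrableOn_pow_mul_fermi_add j 0 0
  rw [← integral_div]
  simp_rw [mul_div_right_comm _ (fermi _), sub_pow_add_add_pow_div_factorial, Finset.sum_mul,
    hterm]
  rw [integral_finsetSum _ fun r _ => (hint _).const_mul _]
  refine Finset.sum_congr rfl fun r _ => ?_
  rw [integral_const_mul, integral_pow_mul_fermi_odd]
  field_simp

theorem hPoly_eq_sum_add (k : ℕ) (t : ℝ) :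
    hPoly k t
      = ∑ r ∈ Finset.range (k + 1), hPolyCoeff (r + 1) * (t ^ (2 * (k - r)) / (2 * (k - r))!)
        + t ^ (2 * k + 2) / (2 * k + 2)! := by
  rw [hPoly, Finset.sum_range_succ']
  congr 1
  · refine Finset.sum_congr rfl fun r _ => ?_
    rw [hPolyCoeff, show 2 * k + 2 - 2 * (r + 1) = 2 * (k - r) by omega]
  · norm_num [hPolyCoeff]

/-- The single-integral identity
`∫_0^∞ (x^{2k+1}/(2k+1)!) K(x,t) dx = 𝔥_{2k+1}(t)`. -/
theorem kernel_single_integral (k : ℕ) (t : ℝ) :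
    ∫ x in Set.Ioi (0 : ℝ),
        x ^ (2 * k + 1) / Nat.factorial (2 * k + 1) * mirzakhaniK x t
      = hPoly k t := by
  simp_rw [div_mul_eq_mul_div]
  rw [integral_div, integral_pow_mul_mirzakhaniK (odd_two_mul_add_one k), add_div,
    integral_sub_pow_add_add_pow_mul_fermi, hPoly_eq_sum_add]
  congr 1
  rw [show 2 * k + 2 = 2 * k + 1 + 1 by ring, Nat.factorial_succ (2 * k + 1)]
  push_cast
  field_simp

end
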